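/- arXiv:2508.13586 — 2 statements merged into one kernel-verified Lean document; each statement's English description precedes it below -/
import Mathlib

section
/- Let Fₙ denote the Fibonacci numbers (F₁ = F₂ = 1, F_{n+2} = F_{n+1} + Fₙ) and set φₙ = F_{n+1}/Fₙ as a real number. Then for every n ≥ 1 the tuple (αₙ, βₙ, γₙ, δₙ, εₙ) = (φ_{n+1}, φ_{n+1}, φₙ, φ_{n+2}φ_{n+1}/φₙ, φₙ) satisfies the Gauss–Napier equations: 1 + αₙ = γₙδₙ, 1 + βₙ = δₙεₙ, 1 + γₙ = εₙαₙ, 1 + δₙ = αₙβₙ, 1 + εₙ = βₙγₙ; moreover δₙ = F_{n+3}Fₙ/F_{n+1}². -/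
/-!
Consecutive convergents satisfy `φₙ φₙ₊₁ = 1 + φₙ`, since `φₙ₊₁ = 1 + 1/φₙ`. Any three
consecutive terms `a, b, c` of the orbit of `x ↦ 1 + 1/x` give the solution
`(b, b, a, cb/a, a)` of the Gauss–Napier equations: all of them reduce to `ab = 1 + a` and
`bc = 1 + b`. The closed form of `δₙ` is the telescoping product
`(F_{n+3}/F_{n+2}) (F_{n+2}/F_{n+1}) (Fₙ/F_{n+1})`.
-/

/-- The Fibonacci numbers viewed as real numbers: `F 1 = F 2 = 1`,
`F (n+2) = F (n+1) + F n`. -/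
noncomputable def fibR (n : ℕ) : ℝ := (Nat.fib n : ℝ)

/-- `φₙ = F_{n+1}/Fₙ`, the `n`-th convergent of the golden ratio. -/
noncomputable def phiR (n : ℕ) : ℝ := fibR (n + 1) / fibR n

def GaussNapier {K : Type*} [Field K] (x₁ x₂ x₃ x₄ x₅ : K) : Prop :=
  1 + x₁ = x₃ * x₄ ∧ 1 + x₂ = x₄ * x₅ ∧ 1 + x₃ = x₅ * x₁ ∧ 1 + x₄ = x₁ * x₂ ∧ 1 + x₅ = x₂ * x₃

theorem gaussNapier_of_mul_eq_one_add {K : Type*} [Field K] {a b c : K} (ha : a ≠ 0)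
    (hab : a * b = 1 + a) (hbc : b * c = 1 + b) : GaussNapier b b a (c * b / a) a := by
  have hδ : a * (c * b / a) = 1 + b := by rw [mul_div_cancel₀ _ ha, mul_comm, hbc]
  refine ⟨hδ.symm, by rw [mul_comm, hδ], hab.symm, ?_, by rw [mul_comm, hab]⟩
  field_simp
  linear_combination hbc - (b + 1) * hab

theorem fibR_add_two (n : ℕ) : fibR (n + 2) = fibR (n + 1) + fibR n := by
  simp only [fibR, Nat.fib_add_two, Nat.cast_add, add_comm]

theorem fibR_ne_zero {n : ℕ} (hn : 0 < n) : fibR n ≠ 0 := by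
  unfold fibR
  exact_mod_cast (Nat.fib_pos.mpr hn).ne'

theorem phiR_ne_zero {n : ℕ} (hn : 0 < n) : phiR n ≠ 0 :=
  div_ne_zero (fibR_ne_zero n.succ_pos) (fibR_ne_zero hn)

theorem phiR_mul_phiR_succ {n : ℕ} (hn : 0 < n) : phiR n * phiR (n + 1) = 1 + phiR n := by
  have := fibR_ne_zero n.succ_pos
  have := fibR_ne_zero hn
  rw [phiR, phiR, fibR_add_two]
  field_simp
  ring

theorem phiR_succ_succ_mul_phiR_succ_div_phiR {n : ℕ} (hn : 0 < n) :
    phiR (n + 2) * phiR (n + 1) / phiR n = fibR (n + 3) * fibR n / fibR (n + 1) ^ 2 := by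
  have := fibR_ne_zero hn
  have := fibR_ne_zero (n + 1).succ_pos
  have := fibR_ne_zero (n + 2).succ_pos
  simp only [phiR]
  field_simp

/-- For every `n ≥ 1` the tuple
`(αₙ, βₙ, γₙ, δₙ, εₙ) = (φ_{n+1}, φ_{n+1}, φₙ, φ_{n+2}φ_{n+1}/φₙ, φₙ)` satisfies the
Gauss–Napier equations, and moreover `δₙ = F_{n+3}Fₙ/F_{n+1}²`. -/
theorem fibonacci_pentagram (n : ℕ) (hn : 1 ≤ n) :
    (1 + phiR (n + 1) = phiR n * (phiR (n + 2) * phiR (n + 1) / phiR n)) ∧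
    (1 + phiR (n + 1) = (phiR (n + 2) * phiR (n + 1) / phiR n) * phiR n) ∧
    (1 + phiR n = phiR n * phiR (n + 1)) ∧
    (1 + phiR (n + 2) * phiR (n + 1) / phiR n = phiR (n + 1) * phiR (n + 1)) ∧
    (1 + phiR n = phiR (n + 1) * phiR n) ∧
    phiR (n + 2) * phiR (n + 1) / phiR n = fibR (n + 3) * fibR n / fibR (n + 1) ^ 2 := by
  obtain ⟨h₁, h₂, h₃, h₄, h₅⟩ :=
    gaussNapier_of_mul_eq_one_add (phiR_ne_zero hn) (phiR_mul_phiR_succ hn)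
      (phiR_mul_phiR_succ n.succ_pos)
  exact ⟨h₁, h₂, h₃, h₄, h₅, phiR_succ_succ_mul_phiR_succ_div_phiR hn⟩
end

section
/- Let Fₙ denote the Fibonacci numbers (F₁ = F₂ = 1, F_{n+2} = F_{n+1} + Fₙ) and ωₙ = F_{n+2}²·F_{n+3}/(F_{n+1}²·Fₙ) ∈ ℝ. Then for every n ≥ 1 and every real t, one has the factorization t(2t − 1)² − (t − 1)ωₙ = (2t − F_{n+3}/F_{n+1})·(2t² + (Fₙ/F_{n+1})t − F_{n+1}/Fₙ − Fₙ/F_{n+1} − 2)/2 · 2, i.e. t(2t − 1)² − (t − 1)ωₙ = (t − F_{n+3}/(2F_{n+1}))·(4t² + 2(Fₙ/F_{n+1})t − 2F_{n+1}/Fₙ − 2Fₙ/F_{n+1} − 4). -/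
/-! Eliminating `F_{n+2}` and `F_{n+3}` by the recurrence turns the factorization into a rational
identity in `Fₙ` and `F_{n+1}` alone, which becomes a polynomial identity after clearing the
denominators `Fₙ F_{n+1}²`. -/

theorem cubic_factorization_of_add_recurrence {K : Type*} [Field K] [NeZero (2 : K)] {x y z w : K}
    (hx : x ≠ 0) (hy : y ≠ 0) (hz : z = y + x) (hw : w = z + y) (t : K) :
    t * (2 * t - 1) ^ 2 - (t - 1) * (z ^ 2 * w / (y ^ 2 * x)) =
      (t - w / (2 * y)) *
        (4 * t ^ 2 + 2 * (x / y) * t - 2 * (y / x) - 2 * (x / y) - 4) := by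
  subst hz hw
  field_simp
  ring

theorem fibR_pos {n : ℕ} (hn : 1 ≤ n) : 0 < fibR n := by
  unfold fibR
  exact_mod_cast Nat.fib_pos.mpr hn

/-- For every `n ≥ 1` and every real `t`, with
`ωₙ = F_{n+2}²·F_{n+3}/(F_{n+1}²·Fₙ)`, one has the factorization
`t(2t − 1)² − (t − 1)ωₙ
  = (t − F_{n+3}/(2F_{n+1}))·(4t² + 2(Fₙ/F_{n+1})t − 2F_{n+1}/Fₙ − 2Fₙ/F_{n+1} − 4)`. -/
theorem fibonacci_pentagram_cubic_factorization (n : ℕ) (hn : 1 ≤ n)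
    (ω : ℝ) (hω : ω = fibR (n + 2) ^ 2 * fibR (n + 3) / (fibR (n + 1) ^ 2 * fibR n))
    (t : ℝ) :
    t * (2 * t - 1) ^ 2 - (t - 1) * ω =
      (t - fibR (n + 3) / (2 * fibR (n + 1))) *
        (4 * t ^ 2 + 2 * (fibR n / fibR (n + 1)) * t
          - 2 * (fibR (n + 1) / fibR n) - 2 * (fibR n / fibR (n + 1)) - 4) := by
  subst hω
  exact cubic_factorization_of_add_recurrence (fibR_pos hn).ne' (fibR_pos (by omega)).ne'
    (fibR_add_two n) (fibR_add_two (n + 1)) t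
end
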